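/- arXiv:2511.07642 — 10 statements merged into one kernel-verified Lean document; each statement's English description precedes it below -/
import Mathlib

section
/- Let X be a compact metric space and f : X → 2^X a set-valued map whose graph {(x,y) : y ∈ f(x)} is open in X × X. If y ∈ fⁿ(x) for some integer n ≥ 1 (where fⁿ denotes the n-fold composition of f as a relation), then there exists δ > 0 such that the open ball B_δ(y) is contained in fⁿ(x̃) for every x̃ in B_δ(x). -/
open Metric Set

/-- n-fold relational composition of a set-valued map: `fIter f 0 x = {x}`,
`fIter f (n+1) x = ⋃ y ∈ fIter f n x, f y`. -/
def fIter {X : Type*} (f : X → Set X) : ℕ → X → Set X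
  | 0, x => {x}
  | n + 1, x => ⋃ y ∈ fIter f n x, f y

/-- Fixing the intermediate point `y` exhibits the graph of the composition as a union of open
rectangles. -/
theorem isOpen_graph_comp {X Y Z : Type*} [TopologicalSpace X] [TopologicalSpace Y]
    [TopologicalSpace Z] {g : X → Set Y} {f : Y → Set Z}
    (hg : IsOpen {p : X × Y | p.2 ∈ g p.1}) (hf : IsOpen {p : Y × Z | p.2 ∈ f p.1}) :
    IsOpen {p : X × Z | p.2 ∈ ⋃ y ∈ g p.1, f y} := by
  have hunion : {p : X × Z | p.2 ∈ ⋃ y ∈ g p.1, f y} = ⋃ y, {x | y ∈ g x} ×ˢ f y := by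
    ext ⟨x, z⟩
    simp
  rw [hunion]
  refine isOpen_iUnion fun y => IsOpen.prod ?_ ?_
  · exact hg.preimage (continuous_id.prodMk continuous_const)
  · exact hf.preimage (continuous_const.prodMk continuous_id)

theorem fIter_one {X : Type*} (f : X → Set X) (x : X) : fIter f 1 x = f x := by
  simp [fIter]

theorem isOpen_graph_fIter {X : Type*} [TopologicalSpace X] {f : X → Set X}
    (hf : IsOpen {p : X × X | p.2 ∈ f p.1}) {n : ℕ} (hn : 1 ≤ n) :
    IsOpen {p : X × X | p.2 ∈ fIter f n p.1} := by
  induction n, hn using Nat.le_induction with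
  | base => simpa only [fIter_one] using hf
  | succ n _ ih => exact isOpen_graph_comp ih hf

theorem stmt_0_general {X : Type*} [MetricSpace X] (f : X → Set X)
    (hgraph : IsOpen {p : X × X | p.2 ∈ f p.1})
    {x y : X} {n : ℕ} (hn : 1 ≤ n) (hy : y ∈ fIter f n x) :
    ∃ δ > 0, ∀ x' ∈ ball x δ, ball y δ ⊆ fIter f n x' := by
  obtain ⟨δ, hδ, hball⟩ := Metric.isOpen_iff.1 (isOpen_graph_fIter hgraph hn) (x, y) hy
  refine ⟨δ, hδ, fun x' hx' y' hy' => ?_⟩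
  rw [← ball_prod_same] at hball
  exact hball (mk_mem_prod hx' hy')

theorem stmt_0 {X : Type*} [MetricSpace X] [CompactSpace X] (f : X → Set X)
    (hgraph : IsOpen {p : X × X | p.2 ∈ f p.1})
    {x y : X} {n : ℕ} (hn : 1 ≤ n) (hy : y ∈ fIter f n x) :
    ∃ δ > 0, ∀ x' ∈ ball x δ, ball y δ ⊆ fIter f n x' :=
  stmt_0_general f hgraph hn hy
end

section
/- Let X be a compact metric space and f : X → 2^X a set-valued map with open graph such that f(x) is nonempty for every x. Then there exists a (not necessarily continuous) function F : X → X and a constant ε₀ > 0 such that the ε₀-neighborhood of the graph of F in X × X is contained in the graph of f, i.e., for all x, z ∈ X with dist(x, z) < ε₀ and all y with dist(y, F(x)) < ε₀, one has y ∈ f(z). -/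
/-!
Choose for every `x` a point `y x ∈ f x` and a closed neighbourhood `C x` of `x` with
`C x × {y x}` inside the graph. Finitely many of these neighbourhoods cover `X`, so the union of
the corresponding `C x × {y x}` is a compact subset `K` of the open graph meeting every vertical
fibre. A compact subset of an open set has a uniform thickening inside it; taking `F x` with
`(x, F x) ∈ K`, that thickening contains `ball x ε₀ × ball (F x) ε₀`.
-/

open Metric Set

theorem IsOpen.exists_isCompact_subset_of_forall_exists_mem {X Y : Type*} [TopologicalSpace X]
    [RegularSpace X] [CompactSpace X] [TopologicalSpace Y] {G : Set (X × Y)} (hG : IsOpen G)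
    (hne : ∀ x, ∃ y, (x, y) ∈ G) :
    ∃ K ⊆ G, IsCompact K ∧ ∀ x, ∃ y, (x, y) ∈ K := by
  choose y hy using hne
  have hsection : ∀ x, ∃ C ∈ nhds x, IsClosed C ∧ C ×ˢ {y x} ⊆ G := fun x => by
    have hopen : IsOpen {z | (z, y x) ∈ G} := hG.preimage (Continuous.prodMk_left (y x))
    obtain ⟨C, hCx, hC, hCG⟩ := exists_mem_nhds_isClosed_subset (hopen.mem_nhds (hy x))
    exact ⟨C, hCx, hC, fun p ⟨hp₁, hp₂⟩ => (Prod.ext rfl hp₂ : p = (p.1, y x)) ▸ hCG hp₁⟩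
  choose C hCx hC hCG using hsection
  obtain ⟨t, ht⟩ := CompactSpace.elim_nhds_subcover C hCx
  refine ⟨⋃ i ∈ t, C i ×ˢ {y i}, iUnion₂_subset fun i _ => hCG i,
    t.isCompact_biUnion fun i _ => (hC i).isCompact.prod isCompact_singleton, fun x => ?_⟩
  obtain ⟨i, hi, hx⟩ := mem_iUnion₂.1 (ht.symm ▸ mem_univ x : x ∈ ⋃ i ∈ t, C i)
  exact ⟨y i, mem_iUnion₂.2 ⟨i, hi, hx, rfl⟩⟩

theorem stmt_1 {X : Type*} [MetricSpace X] [CompactSpace X] (f : X → Set X)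
    (hgraph : IsOpen {p : X × X | p.2 ∈ f p.1})
    (hne : ∀ x, (f x).Nonempty) :
    ∃ (F : X → X) (ε₀ : ℝ), 0 < ε₀ ∧
      ∀ x z y : X, dist x z < ε₀ → dist y (F x) < ε₀ → y ∈ f z := by
  obtain ⟨K, hKG, hK, hKfst⟩ := hgraph.exists_isCompact_subset_of_forall_exists_mem hne
  obtain ⟨ε₀, hε₀, hthick⟩ := hK.exists_thickening_subset_open hgraph hKG
  choose F hF using hKfst
  refine ⟨F, ε₀, hε₀, fun x z y hxz hy =>
    hthick (ball_subset_thickening (hF x) ε₀ (show (z, y) ∈ _ from ?_))⟩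
  rw [mem_ball, Prod.dist_eq, max_lt_iff]
  exact ⟨by rwa [dist_comm], hy⟩
end

section
/- Let X be a connected metric space and f : X → 2^X a set-valued map with open graph such that f(x) is nonempty, open, and connected for every x ∈ X. Then the image f(X) = ⋃_{x ∈ X} f(x) is a connected subset of X. -/
/-!
An open graph makes `f` lower hemicontinuous, so for open `u` the set of `x` with `f x` meeting
`u` is open. A separation `u, v` of `⋃ x, f x` thus yields an open cover of the connected domain
by two nonempty such sets; a point `x` in both has `f x` meeting `u` and `v`, contradicting the
connectedness of `f x`.
-/

open Set

section

variable {α β : Type*} [TopologicalSpace α] [TopologicalSpace β] {f : α → Set β}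

theorem LowerHemicontinuous.isPreconnected_iUnion [PreconnectedSpace α]
    (hf : LowerHemicontinuous f) (hne : ∀ x, (f x).Nonempty)
    (hpre : ∀ x, IsPreconnected (f x)) : IsPreconnected (⋃ x, f x) := by
  rw [lowerHemicontinuous_iff_isOpen_inter_nonempty] at hf
  intro u v hu hv hsub ⟨a, ha, hau⟩ ⟨b, hb, hbv⟩
  have hcover : univ ⊆ {x | (f x ∩ u).Nonempty} ∪ {x | (f x ∩ v).Nonempty} := fun x _ => by
    obtain ⟨y, hy⟩ := hne x
    exact (hsub (mem_iUnion_of_mem x hy)).imp (fun h => ⟨y, hy, h⟩) (fun h => ⟨y, hy, h⟩)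
  obtain ⟨xa, hxa⟩ := mem_iUnion.1 ha
  obtain ⟨xb, hxb⟩ := mem_iUnion.1 hb
  obtain ⟨x, -, hxu, hxv⟩ := isPreconnected_univ _ _ (hf u hu) (hf v hv) hcover
    ⟨xa, trivial, a, hxa, hau⟩ ⟨xb, trivial, b, hxb, hbv⟩
  obtain ⟨y, hy, hyuv⟩ := hpre x u v hu hv ((subset_iUnion f x).trans hsub) hxu hxv
  exact ⟨y, mem_iUnion_of_mem x hy, hyuv⟩

theorem LowerHemicontinuous.isConnected_iUnion [ConnectedSpace α]
    (hf : LowerHemicontinuous f) (hconn : ∀ x, IsConnected (f x)) :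
    IsConnected (⋃ x, f x) := by
  obtain ⟨x⟩ := ‹ConnectedSpace α›.toNonempty
  exact ⟨(hconn x).nonempty.mono (subset_iUnion f x),
    hf.isPreconnected_iUnion (fun x => (hconn x).nonempty) fun x => (hconn x).isPreconnected⟩

end

theorem stmt_2 {X : Type*} [MetricSpace X] [ConnectedSpace X] (f : X → Set X)
    (hgraph : IsOpen {p : X × X | p.2 ∈ f p.1})
    (hval : ∀ x, IsOpen (f x) ∧ IsConnected (f x)) :
    IsConnected (⋃ x : X, f x) :=
  (HasOpenCGraph.hasOpenLowerSections hgraph).lowerHemicontinuous.isConnected_iUnion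
    fun x => (hval x).2
end

section
/- Let X be a compact metric space and f : X → 2^X an open set-valued map. Write x ⇝ y if there exist n ≥ 1 and a finite sequence x = x₀, x₁, …, xₙ = y with x_{k+1} ∈ f(x_k). Define Ω(f) = {x : x ⇝ x} and, for x ∈ Ω(f), the class [x]_Ω = {y ∈ Ω(f) : x ⇝ y and y ⇝ x}. Then [x]_Ω is an open subset of X, and consequently Ω(f) is open. -/
open Metric Set

/-- Image of a set under the n-fold composition. -/
def fIterS {X : Type*} (f : X → Set X) (n : ℕ) (A : Set X) : Set X :=
  ⋃ a ∈ A, fIter f n a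

/-- `x ⇝ y`: there is a finite trajectory of length ≥ 1 from `x` to `y`. -/
def Reach {X : Type*} (f : X → Set X) (x y : X) : Prop :=
  ∃ n, 1 ≤ n ∧ y ∈ fIter f n x

/-- The recurrent set `Ω(f)`. -/
def Omega {X : Type*} (f : X → Set X) : Set X := {x | Reach f x x}

/-- The final recurrent set `Ω_final(f)`. -/
def OmegaFinal {X : Type*} (f : X → Set X) : Set X :=
  {x | ∀ y, Reach f x y → Reach f y x}

/-- `f` is an open set-valued map: open graph and nonempty open connected values. -/
def IsOpenSVM {X : Type*} [TopologicalSpace X] (f : X → Set X) : Prop :=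
  IsOpen {p : X × X | p.2 ∈ f p.1} ∧ ∀ x, IsOpen (f x) ∧ IsConnected (f x)

/-- `f` is transitive. -/
def SVMTransitive {X : Type*} [TopologicalSpace X] (f : X → Set X) : Prop :=
  ∀ A B : Set X, IsOpen A → A.Nonempty → IsOpen B → B.Nonempty →
    ∃ n, 1 ≤ n ∧ (fIterS f n A ∩ B).Nonempty

/-
Reachability is open in both variables: `{y | x ⇝ y}` is a union of the open sets
`fIter f (n+1) x`, and `{x | x ⇝ y}` is a union of sections `{x | z ∈ f x}` of the open graph.
The class `[x]_Ω = omegaClass f x` is the intersection of the two, since `x ⇝ y ⇝ x` already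
forces `y ⇝ y`; and `Ω(f)` is the union of the classes of its points.
-/

section Reach

variable {X : Type*} {f : X → Set X}

def omegaClass (f : X → Set X) (x : X) : Set X := {y | y ∈ Omega f ∧ Reach f x y ∧ Reach f y x}

lemma mem_fIter_add_iff {m n : ℕ} {x z : X} :
    z ∈ fIter f (m + n) x ↔ ∃ y ∈ fIter f m x, z ∈ fIter f n y := by
  induction n generalizing z with
  | zero => simp [fIter]
  | succ n ih =>
    rw [← Nat.add_assoc]
    simp only [fIter, mem_iUnion, exists_prop, ih]
    constructor
    · rintro ⟨w, ⟨y, hy, hw⟩, hz⟩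
      exact ⟨y, hy, w, hw, hz⟩
    · rintro ⟨y, hy, w, hw, hz⟩
      exact ⟨w, ⟨y, hy, hw⟩, hz⟩

lemma fIter_succ' (n : ℕ) (x : X) : fIter f (n + 1) x = ⋃ z ∈ f x, fIter f n z := by
  ext y
  rw [Nat.add_comm, mem_fIter_add_iff]
  simp [fIter]

lemma reach_iff_exists_mem_fIter_succ {x y : X} : Reach f x y ↔ ∃ n, y ∈ fIter f (n + 1) x := by
  constructor
  · rintro ⟨n, hn, hy⟩
    obtain ⟨m, rfl⟩ := Nat.exists_eq_add_of_le' hn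
    exact ⟨m, hy⟩
  · rintro ⟨n, hy⟩
    exact ⟨n + 1, Nat.le_add_left 1 n, hy⟩

lemma Reach.trans {x y z : X} (hxy : Reach f x y) (hyz : Reach f y z) : Reach f x z := by
  obtain ⟨m, hm, hy⟩ := hxy
  obtain ⟨n, -, hz⟩ := hyz
  exact ⟨m + n, hm.trans (Nat.le_add_right m n), mem_fIter_add_iff.2 ⟨y, hy, hz⟩⟩

variable [TopologicalSpace X]

lemma isOpen_fIter_succ (hf : IsOpen {p : X × X | p.2 ∈ f p.1}) (n : ℕ) (x : X) :
    IsOpen (fIter f (n + 1) x) :=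
  isOpen_biUnion fun _ _ => hf.preimage (continuous_const.prodMk continuous_id)

lemma isOpen_setOf_mem_fIter_succ (hf : IsOpen {p : X × X | p.2 ∈ f p.1}) (n : ℕ) (y : X) :
    IsOpen {x | y ∈ fIter f (n + 1) x} := by
  have : {x | y ∈ fIter f (n + 1) x} = ⋃ z ∈ {z | y ∈ fIter f n z}, {x | z ∈ f x} := by
    ext x
    simp only [fIter_succ', mem_ofPred_eq, mem_iUnion, exists_prop]
    exact exists_congr fun z => and_comm
  rw [this]
  exact isOpen_biUnion fun z _ => hf.preimage (continuous_id.prodMk continuous_const)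

lemma isOpen_setOf_reach (hf : IsOpen {p : X × X | p.2 ∈ f p.1}) (x : X) :
    IsOpen {y | Reach f x y} := by
  simp only [reach_iff_exists_mem_fIter_succ, ofPred_exists]
  exact isOpen_iUnion fun n => isOpen_fIter_succ hf n x

lemma isOpen_setOf_reach_left (hf : IsOpen {p : X × X | p.2 ∈ f p.1}) (y : X) :
    IsOpen {x | Reach f x y} := by
  simp only [reach_iff_exists_mem_fIter_succ, ofPred_exists]
  exact isOpen_iUnion fun n => isOpen_setOf_mem_fIter_succ hf n y

lemma isOpen_omegaClass (hf : IsOpen {p : X × X | p.2 ∈ f p.1}) (x : X) :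
    IsOpen (omegaClass f x) := by
  have : omegaClass f x = {y | Reach f x y} ∩ {y | Reach f y x} :=
    ext fun y => ⟨fun h => h.2, fun h => ⟨h.2.trans h.1, h⟩⟩
  rw [this]
  exact (isOpen_setOf_reach hf x).inter (isOpen_setOf_reach_left hf x)

lemma isOpen_omega (hf : IsOpen {p : X × X | p.2 ∈ f p.1}) : IsOpen (Omega f) := by
  have : Omega f = ⋃ x, omegaClass f x :=
    ext fun y => ⟨fun hy => mem_iUnion.2 ⟨y, hy, hy, hy⟩, fun hy => (mem_iUnion.1 hy).choose_spec.1⟩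
  rw [this]
  exact isOpen_iUnion (isOpen_omegaClass hf)

end Reach

theorem stmt_3_general {X : Type*} [MetricSpace X] (f : X → Set X)
    (hf : IsOpenSVM f) {x : X} :
    IsOpen {y | y ∈ Omega f ∧ Reach f x y ∧ Reach f y x} ∧ IsOpen (Omega f) :=
  ⟨isOpen_omegaClass hf.1 x, isOpen_omega hf.1⟩

theorem stmt_3 {X : Type*} [MetricSpace X] [CompactSpace X] (f : X → Set X)
    (hf : IsOpenSVM f) {x : X} (hx : x ∈ Omega f) :
    IsOpen {y | y ∈ Omega f ∧ Reach f x y ∧ Reach f y x} ∧ IsOpen (Omega f) :=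
  stmt_3_general f hf
end

section
/- Let X be a compact metric space and f : X → 2^X an open set-valued map (open graph, nonempty open values). Then the recurrent set Ω(f) = {x : x ⇝ x} is nonempty. -/
open Metric Set

/-
A compact space is covered by finitely many of the open sets `{x | y ∈ f x}`, so `f` admits a
selection taking only finitely many values. Any orbit of that selection must revisit a point, and
the loop it runs through is a trajectory of `f` from that point back to itself.
-/

lemma iterate_mem_fIter {X : Type*} {f : X → Set X} {g : X → X} (hg : ∀ x, g x ∈ f x)
    (n : ℕ) (x : X) : g^[n] x ∈ fIter f n x := by
  induction n with
  | zero => exact mem_singleton x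
  | succ n ih =>
    rw [Function.iterate_succ_apply']
    exact mem_biUnion ih (hg _)

lemma exists_selection_finite_range {X Y : Type*} [TopologicalSpace X] [CompactSpace X]
    {f : X → Set Y} (hf : ∀ y, IsOpen {x | y ∈ f x}) (hne : ∀ x, (f x).Nonempty) :
    ∃ g : X → Y, (range g).Finite ∧ ∀ x, g x ∈ f x := by
  have hcover : univ ⊆ ⋃ y, {x | y ∈ f x} := fun x _ => mem_iUnion.2 (hne x)
  obtain ⟨t, ht⟩ := isCompact_univ.elim_finite_subcover _ hf hcover
  have hsel : ∀ x, ∃ y ∈ t, y ∈ f x := fun x => by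
    simpa only [mem_iUnion, mem_ofPred_eq, exists_prop] using ht (mem_univ x)
  choose g hgt hgf using hsel
  exact ⟨g, t.finite_toSet.subset (range_subset_iff.2 hgt), hgf⟩

lemma periodicPts_nonempty_of_finite_range {α : Type*} [Nonempty α] {g : α → α}
    (hg : (range g).Finite) : (Function.periodicPts g).Nonempty := by
  obtain ⟨x₀⟩ := ‹Nonempty α›
  obtain ⟨a, b, hab, heq⟩ := hg.exists_lt_map_eq_of_forall_mem
    (f := fun k => g^[k + 1] x₀) fun k => by
      rw [Function.iterate_succ_apply']
      exact mem_range_self _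
  refine ⟨g^[a + 1] x₀, b - a, Nat.sub_pos_of_lt hab, ?_⟩
  change g^[b - a] (g^[a + 1] x₀) = g^[a + 1] x₀
  rw [← Function.iterate_add_apply, show b - a + (a + 1) = b + 1 by omega]
  exact heq.symm

theorem stmt_5 {X : Type*} [MetricSpace X] [CompactSpace X] [Nonempty X]
    (f : X → Set X) (hf : IsOpenSVM f) :
    (Omega f).Nonempty := by
  have hsections : ∀ y, IsOpen {x | y ∈ f x} := fun y =>
    hf.1.preimage (continuous_id.prodMk continuous_const)
  obtain ⟨g, hg_fin, hgf⟩ :=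
    exists_selection_finite_range hsections fun x => (hf.2 x).2.nonempty
  obtain ⟨x, n, hn, hper⟩ := periodicPts_nonempty_of_finite_range hg_fin
  have hloop := iterate_mem_fIter hgf n x
  rw [hper.eq] at hloop
  exact ⟨x, n, hn, hloop⟩
end

section
/- Let X be a compact metric space and f : X → 2^X a transitive open set-valued map. Then for every x ∈ X, f(X) = ⋃_{n ≥ 1} fⁿ(x); that is, the image of f equals the set of points reachable from any single point. -/
open Metric Set

/-!
If `y ∈ f x'`, openness of the graph makes `U = {u | y ∈ f u}` an open neighbourhood of `x'`.
Transitivity applied to the open sets `f x` and `U` yields `u ∈ U` reachable from `x`, and then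
`y ∈ f u` is reachable from `x` as well. The reverse inclusion holds for any relation.
-/

section fIter

variable {X : Type*} (f : X → Set X)

lemma fIter_subset_fIter_succ_of_mem {x a : X} (ha : a ∈ f x) :
    ∀ n, fIter f n a ⊆ fIter f (n + 1) x
  | 0 => by simpa [fIter] using ha
  | n + 1 => biUnion_mono (fIter_subset_fIter_succ_of_mem ha n) fun _ _ => subset_rfl

lemma fIterS_subset_fIter_succ (n : ℕ) (x : X) : fIterS f n (f x) ⊆ fIter f (n + 1) x :=
  iUnion₂_subset fun _ ha => fIter_subset_fIter_succ_of_mem f ha n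

lemma mem_fIter_succ_of_mem {n : ℕ} {x z w : X} (hz : z ∈ fIter f n x) (hw : w ∈ f z) :
    w ∈ fIter f (n + 1) x :=
  mem_biUnion hz hw

lemma fIter_succ_subset_iUnion (n : ℕ) (x : X) : fIter f (n + 1) x ⊆ ⋃ x', f x' :=
  iUnion₂_subset fun z _ => subset_iUnion f z

end fIter

lemma isOpen_setOf_mem_of_isOpen_graph {X : Type*} [TopologicalSpace X] {f : X → Set X}
    (hgraph : IsOpen {p : X × X | p.2 ∈ f p.1}) (y : X) : IsOpen {u | y ∈ f u} :=
  hgraph.preimage (continuous_id.prodMk continuous_const)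

theorem stmt_10_general {X : Type*} [MetricSpace X] (f : X → Set X)
    (hf : IsOpenSVM f) (htrans : SVMTransitive f) (x : X) :
    (⋃ x' : X, f x') = ⋃ n ≥ 1, fIter f n x := by
  refine Subset.antisymm ?_ ?_
  · rintro y ⟨_, ⟨x', rfl⟩, hy⟩
    obtain ⟨n, -, u, hu, hyu⟩ := htrans (f x) {u | y ∈ f u} (hf.2 x).1 (hf.2 x).2.nonempty
      (isOpen_setOf_mem_of_isOpen_graph hf.1 y) ⟨x', hy⟩
    exact mem_biUnion (by omega : 1 ≤ n + 2)
      (mem_fIter_succ_of_mem f (fIterS_subset_fIter_succ f n x hu) hyu)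
  · refine iUnion₂_subset fun n hn => ?_
    obtain ⟨m, rfl⟩ : ∃ m, n = m + 1 := ⟨n - 1, by omega⟩
    exact fIter_succ_subset_iUnion f m x

theorem stmt_10 {X : Type*} [MetricSpace X] [CompactSpace X] (f : X → Set X)
    (hf : IsOpenSVM f) (htrans : SVMTransitive f) (x : X) :
    (⋃ x' : X, f x') = ⋃ n ≥ 1, fIter f n x :=
  stmt_10_general f hf htrans x
end

section
/- Let X be a compact metric space, f : X → 2^X a transitive open set-valued map, and U ⊆ X an open set whose closure satisfies cl(U) ⊆ f(X). Then there exists n ≥ 1 such that U ⊆ fⁿ(U). -/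
/-!
Around each point `u` of `cl U` the open graph of `f` gives open sets `V ∋ x`, `W ∋ u` with
`W ⊆ f v` for every `v ∈ V` (where `u ∈ f x`). Transitivity sends `W ∩ U` into `V` in some `n`
steps, so `W ⊆ fⁿ⁺¹(W ∩ U)`, and iterating, `W ⊆ fᵐ(W ∩ U)` for every positive multiple `m` of
`n + 1`. Finitely many windows `W` cover the compact set `cl U`; the product of their periods is
a common multiple that works for all of them at once.
-/

open Metric Set

section Iterates

variable {X : Type*} (f : X → Set X)

@[simp]
lemma mem_fIterS {n : ℕ} {A : Set X} {z : X} : z ∈ fIterS f n A ↔ ∃ a ∈ A, z ∈ fIter f n a := by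
  simp only [fIterS, mem_iUnion, exists_prop]

lemma mem_fIter_add {x y z : X} {n m : ℕ} (hy : y ∈ fIter f n x) (hz : z ∈ fIter f m y) :
    z ∈ fIter f (n + m) x := by
  induction m generalizing z with
  | zero =>
    rw [fIter, mem_singleton_iff] at hz
    exact hz ▸ hy
  | succ m ih =>
    simp only [fIter, mem_iUnion] at hz ⊢
    obtain ⟨w, hw, hzw⟩ := hz
    exact ⟨w, ih hw, hzw⟩

lemma fIterS_mono {n : ℕ} {A B : Set X} (h : A ⊆ B) : fIterS f n A ⊆ fIterS f n B := by
  simp only [subset_def, mem_fIterS]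
  rintro z ⟨a, ha, hz⟩
  exact ⟨a, h ha, hz⟩

lemma fIterS_fIterS_subset (n m : ℕ) (A : Set X) :
    fIterS f m (fIterS f n A) ⊆ fIterS f (n + m) A := by
  simp only [subset_def, mem_fIterS]
  rintro z ⟨y, ⟨a, ha, hy⟩, hz⟩
  exact ⟨a, ha, mem_fIter_add f hy hz⟩

lemma subset_fIterS_of_dvd {A W : Set X} {b m : ℕ} (hA : A ⊆ W) (hW : W ⊆ fIterS f b A)
    (hm : b ∣ m) (hm0 : m ≠ 0) : W ⊆ fIterS f m A := by
  obtain ⟨k, rfl⟩ := hm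
  have hk : 1 ≤ k := Nat.one_le_iff_ne_zero.2 (right_ne_zero_of_mul hm0)
  induction k, hk using Nat.le_induction with
  | base => simpa using hW
  | succ k hk ih =>
    calc W ⊆ fIterS f b A := hW
      _ ⊆ fIterS f b W := fIterS_mono f hA
      _ ⊆ fIterS f b (fIterS f (b * k) A) :=
        fIterS_mono f (ih (mul_ne_zero (left_ne_zero_of_mul hm0) (by omega)))
      _ ⊆ fIterS f (b * (k + 1)) A := by
        rw [mul_add_one]
        exact fIterS_fIterS_subset f _ _ A

end Iterates

section OpenMap

variable {X : Type*} [TopologicalSpace X] {f : X → Set X}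

lemma IsOpenSVM.exists_open_nhds_subset (hf : IsOpenSVM f) {x u : X} (hu : u ∈ f x) :
    ∃ V W : Set X, IsOpen V ∧ IsOpen W ∧ x ∈ V ∧ u ∈ W ∧ ∀ v ∈ V, W ⊆ f v := by
  obtain ⟨V, W, hV, hW, hxV, huW, hVW⟩ := isOpen_prod_iff.1 hf.1 x u hu
  exact ⟨V, W, hV, hW, hxV, huW, fun v hv w hw => hVW (mk_mem_prod hv hw)⟩

lemma exists_open_nhds_subset_fIterS (hf : IsOpenSVM f) (htrans : SVMTransitive f)
    {U : Set X} (hU : IsOpen U) {u : X} (hu : u ∈ closure U) (hfu : u ∈ ⋃ x, f x) :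
    ∃ W : Set X, IsOpen W ∧ u ∈ W ∧ ∃ b, 1 ≤ b ∧ W ⊆ fIterS f b (W ∩ U) := by
  obtain ⟨x, hx⟩ := mem_iUnion.1 hfu
  obtain ⟨V, W, hV, hW, hxV, huW, hVW⟩ := hf.exists_open_nhds_subset hx
  have hWU : (W ∩ U).Nonempty := mem_closure_iff.1 hu W hW huW
  obtain ⟨n, -, v, hv, hvV⟩ := htrans (W ∩ U) V (hW.inter hU) hWU hV ⟨x, hxV⟩
  obtain ⟨p, hp, hvp⟩ := (mem_fIterS f).1 hv
  refine ⟨W, hW, huW, n + 1, by omega, fun w hw => (mem_fIterS f).2 ⟨p, hp, ?_⟩⟩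
  exact mem_fIter_add f hvp (by simpa [fIter] using hVW v hvV hw)

end OpenMap

theorem stmt_11 {X : Type*} [MetricSpace X] [CompactSpace X] (f : X → Set X)
    (hf : IsOpenSVM f) (htrans : SVMTransitive f)
    (U : Set X) (hU : IsOpen U) (hcl : closure U ⊆ ⋃ x : X, f x) :
    ∃ n, 1 ≤ n ∧ U ⊆ fIterS f n U := by
  choose! W hW huW b hb hWb using fun u (hu : u ∈ closure U) =>
    exists_open_nhds_subset_fIterS hf htrans hU hu (hcl hu)
  obtain ⟨t, htU, htcover⟩ := isClosed_closure.isCompact.elim_nhds_subcover W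
    fun u hu => (hW u hu).mem_nhds (huW u hu)
  have hN : ∏ u ∈ t, b u ≠ 0 :=
    Finset.prod_ne_zero_iff.2 fun u hu => Nat.one_le_iff_ne_zero.1 (hb u (htU u hu))
  refine ⟨∏ u ∈ t, b u, Nat.one_le_iff_ne_zero.2 hN, fun x hx => ?_⟩
  obtain ⟨u, hut, hxu⟩ := mem_iUnion₂.1 (htcover (subset_closure hx))
  have hW_sub := subset_fIterS_of_dvd f inter_subset_left (hWb u (htU u hut))
    (Finset.dvd_prod_of_mem b hut) hN
  exact fIterS_mono f inter_subset_right (hW_sub hxu)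
end

section
/- Let X be a compact metric space, f : X → 2^X an open set-valued map, and C ⊆ X a nonempty connected open set with f(C) ⊆ C. If x ∈ ∂C (the boundary of C), then f(x) ⊆ C. -/
open Metric Set

theorem subset_biUnion_of_isOpen_graph_of_mem_closure {X Y : Type*} [TopologicalSpace X]
    [TopologicalSpace Y] {f : X → Set Y} (hf : IsOpen {p : X × Y | p.2 ∈ f p.1})
    {C : Set X} {x : X} (hx : x ∈ closure C) :
    f x ⊆ ⋃ c ∈ C, f c := by
  intro y hy
  obtain ⟨u, v, hu, -, hxu, hyv, huv⟩ := isOpen_prod_iff.mp hf x y hy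
  obtain ⟨c, hcu, hcC⟩ := mem_closure_iff.mp hx u hu hxu
  exact mem_biUnion hcC (huv (mk_mem_prod hcu hyv))

theorem stmt_14_general {X : Type*} [MetricSpace X] (f : X → Set X)
    (hf : IsOpenSVM f) (C : Set X) (hinv : (⋃ c ∈ C, f c) ⊆ C)
    {x : X} (hx : x ∈ frontier C) :
    f x ⊆ C :=
  (subset_biUnion_of_isOpen_graph_of_mem_closure hf.1 hx.1).trans hinv

theorem stmt_14 {X : Type*} [MetricSpace X] [CompactSpace X] (f : X → Set X)
    (hf : IsOpenSVM f) (C : Set X) (hCne : C.Nonempty) (hCconn : IsConnected C)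
    (hCopen : IsOpen C) (hinv : (⋃ c ∈ C, f c) ⊆ C)
    {x : X} (hx : x ∈ frontier C) :
    f x ⊆ C :=
  stmt_14_general f hf C hinv hx
end

section
/- Let M be a compact metric space without isolated points. Then for every ε > 0 there exists r > 0 such that for every x₀ ∈ M the annulus {x ∈ M : r < dist(x, x₀) < ε} is nonempty. -/
/-! Near a non-isolated point `x₀` pick `y ≠ x₀` with `d := dist y x₀ < ε`; for all `x` near `x₀`
the same `y` still satisfies `d / 2 < dist y x < ε`, so `r = d / 2` works locally, and compactness
makes the radius uniform. -/

open Metric Set Filter Topology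

/- The radius is the first coordinate of `z` so that `IsCompact.eventually_forall_of_forall_eventually`
can make it uniform; the condition holds for every radius near `0`, negative ones included. -/
theorem eventually_nhds_exists_dist_mem_Ioo {M : Type*} [MetricSpace M] {x₀ : M}
    (hx₀ : (𝓝[≠] x₀).NeBot) {ε : ℝ} (hε : 0 < ε) :
    ∀ᶠ z : ℝ × M in 𝓝 (0, x₀), ∃ y, dist y z.2 ∈ Ioo z.1 ε := by
  obtain ⟨y, hyx₀, hyε⟩ :=
    Filter.nonempty_of_mem (inter_mem_nhdsWithin {x₀}ᶜ (ball_mem_nhds x₀ hε))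
  have hd : 0 < dist y x₀ := dist_pos.2 hyx₀
  have hsmall : ∀ᶠ z : ℝ × M in 𝓝 (0, x₀), z.1 < dist y x₀ / 2 :=
    continuousAt_fst.eventually (eventually_lt_nhds (half_pos hd))
  have hdist : ∀ᶠ z : ℝ × M in 𝓝 (0, x₀), dist y z.2 ∈ Ioo (dist y x₀ / 2) ε :=
    (continuous_const.dist continuous_snd).continuousAt.eventually
      (Ioo_mem_nhds (half_lt_self hd) hyε)
  filter_upwards [hsmall, hdist] with z hz hyz
  exact ⟨y, hz.trans hyz.1, hyz.2⟩

theorem IsCompact.exists_pos_forall_exists_dist_mem_Ioo {M : Type*} [MetricSpace M] {K : Set M}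
    (hK : IsCompact K) (hK' : ∀ x ∈ K, (𝓝[≠] x).NeBot) {ε : ℝ} (hε : 0 < ε) :
    ∃ r > 0, ∀ x₀ ∈ K, ∃ x, dist x x₀ ∈ Ioo r ε :=
  (hK.eventually_forall_of_forall_eventually fun x hx ↦
    eventually_nhds_exists_dist_mem_Ioo (hK' x hx) hε).exists_gt

theorem stmt_17 {M : Type*} [MetricSpace M] [CompactSpace M]
    (hiso : ∀ x : M, (nhdsWithin x {x}ᶜ).NeBot) :
    ∀ ε : ℝ, 0 < ε → ∃ r > 0, ∀ x₀ : M,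
      ∃ x : M, r < dist x x₀ ∧ dist x x₀ < ε := by
  intro ε hε
  obtain ⟨r, hr, hK⟩ := isCompact_univ.exists_pos_forall_exists_dist_mem_Ioo
    (fun x _ ↦ hiso x) hε
  exact ⟨r, hr, fun x₀ ↦ hK x₀ (mem_univ x₀)⟩
end

section
/- Let X be a compact connected metric space without isolated points and f : X → 2^X an open set-valued map. Then for every m ∈ ℕ there exists ε₀ > 0 such that for every x ∈ X one can find points x₁, …, x_m ∈ f(x) with dist(x_i, x_j) > ε₀ for all 1 ≤ i < j ≤ m. -/
/-!
A nonempty open set in a space without isolated points is infinite, so each `f x` contains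
`m` distinct points. Because the graph of `f` is open, the same `m` points lie in `f y` for all
`y` near `x`, and they stay separated by any `ε` below their minimal mutual distance. Compactness
of `X` makes one such `ε > 0` work for every point.
-/

open Metric Set Filter Topology Function

theorem Set.Infinite.exists_injective_fin {α : Type*} {s : Set α} (hs : s.Infinite) (m : ℕ) :
    ∃ g : Fin m → α, Injective g ∧ ∀ i, g i ∈ s :=
  let e := Fin.valEmbedding.trans hs.natEmbedding
  ⟨fun i => e i, Subtype.val_injective.comp e.injective, fun i => (e i).2⟩

theorem eventually_pairwise_lt_dist {Y ι : Type*} [MetricSpace Y] [Finite ι] {g : ι → Y}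
    (hg : Injective g) : ∀ᶠ ε in 𝓝 (0 : ℝ), Pairwise fun i j => ε < dist (g i) (g j) := by
  simp only [Pairwise, eventually_all]
  exact fun i j hij => eventually_lt_nhds (dist_pos.2 (hg.ne hij))

theorem eventually_forall_mem_of_isOpen_graph {X Y ι : Type*} [TopologicalSpace X]
    [TopologicalSpace Y] [Finite ι] {f : X → Set Y} (hgraph : IsOpen {p : X × Y | p.2 ∈ f p.1})
    {x : X} {g : ι → Y} (hg : ∀ i, g i ∈ f x) : ∀ᶠ y in 𝓝 x, ∀ i, g i ∈ f y :=
  eventually_all.2 fun i => (hgraph.preimage (Continuous.prodMk_left (g i))).mem_nhds (hg i)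

theorem eventually_exists_pairwise_lt_dist_of_isOpen_graph {X Y ι : Type*} [TopologicalSpace X]
    [MetricSpace Y] [Finite ι] {f : X → Set Y} (hgraph : IsOpen {p : X × Y | p.2 ∈ f p.1})
    {x : X} {g : ι → Y} (hg_inj : Injective g) (hg_mem : ∀ i, g i ∈ f x) :
    ∀ᶠ z : ℝ × X in 𝓝 (0, x),
      ∃ g : ι → Y, (∀ i, g i ∈ f z.2) ∧ Pairwise fun i j => z.1 < dist (g i) (g j) :=
  ((eventually_pairwise_lt_dist hg_inj).prod_nhds
    (eventually_forall_mem_of_isOpen_graph hgraph hg_mem)).mono fun _ hz => ⟨g, hz.2, hz.1⟩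

theorem stmt_18_general {X : Type*} [MetricSpace X] [CompactSpace X]
    (hiso : ∀ x : X, (nhdsWithin x {x}ᶜ).NeBot)
    (f : X → Set X)
    (hgraph : IsOpen {p : X × X | p.2 ∈ f p.1})
    (hval : ∀ x, IsOpen (f x) ∧ IsConnected (f x)) (m : ℕ) :
    ∃ ε₀ > 0, ∀ x : X, ∃ g : Fin m → X,
      (∀ i, g i ∈ f x) ∧ ∀ i j, i ≠ j → ε₀ < dist (g i) (g j) := by
  have hlocal : ∀ x, ∀ᶠ z : ℝ × X in 𝓝 (0, x),
      ∃ g : Fin m → X, (∀ i, g i ∈ f z.2) ∧ Pairwise fun i j => z.1 < dist (g i) (g j) := by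
    intro x
    obtain ⟨y, hy⟩ := (hval x).2.nonempty
    have hinf : (f x).Infinite := infinite_of_mem_nhds (hx := hiso y) y ((hval x).1.mem_nhds hy)
    obtain ⟨g, hg_inj, hg_mem⟩ := hinf.exists_injective_fin m
    exact eventually_exists_pairwise_lt_dist_of_isOpen_graph hgraph hg_inj hg_mem
  have huniform : ∀ᶠ ε in 𝓝 (0 : ℝ), ∀ x ∈ univ,
      ∃ g : Fin m → X, (∀ i, g i ∈ f x) ∧ Pairwise fun i j => ε < dist (g i) (g j) :=
    isCompact_univ.eventually_forall_of_forall_eventually fun x _ => hlocal x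
  obtain ⟨ε, hε, hunif⟩ := huniform.exists_gt
  exact ⟨ε, hε, fun x => hunif x (mem_univ x)⟩

theorem stmt_18 {X : Type*} [MetricSpace X] [CompactSpace X] [ConnectedSpace X]
    (hiso : ∀ x : X, (nhdsWithin x {x}ᶜ).NeBot)
    (f : X → Set X)
    (hgraph : IsOpen {p : X × X | p.2 ∈ f p.1})
    (hval : ∀ x, IsOpen (f x) ∧ IsConnected (f x)) (m : ℕ) :
    ∃ ε₀ > 0, ∀ x : X, ∃ g : Fin m → X,
      (∀ i, g i ∈ f x) ∧ ∀ i j, i ≠ j → ε₀ < dist (g i) (g j) :=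
  stmt_18_general hiso f hgraph hval m
end
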